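/- arXiv:1908.09271 — 5 statements merged into one kernel-verified Lean document; each statement's English description precedes it below -/
import Mathlib

section
/- Let $n, S$ be positive integers and let $(U_\ell)$ be the Markov chain on $\{0,\dots,n\}$ with $U_0 = n$ and $U_{\ell+1} = U_\ell - 1$ with probability $U_\ell/(n - \lfloor \ell/S \rfloor)$, else $U_{\ell+1} = U_\ell$. Then for all $0 \le \ell \le Sn$, $\mathbb{E}[U_\ell] = n \prod_{i=0}^{\ell-1}\left(1 - \frac{1}{n - \lfloor i/S \rfloor}\right)$. -/
/-- For the coupon-collector Markov chain (`U 0 = n`; `U (ℓ+1) = U ℓ - 1` with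
probability `U ℓ / (n - ⌊ℓ/S⌋)`, else unchanged; `P ℓ u = Pr[U ℓ = u]`),
for all `ℓ ≤ S*n` one has `E[U ℓ] = n * ∏_{i=0}^{ℓ-1} (1 - 1/(n - ⌊i/S⌋))`. -/
theorem stmt_1 (n S : ℕ) (hn : 0 < n) (hS : 0 < S)
    (P : ℕ → ℕ → ℝ)
    (hPnn : ∀ ℓ u, 0 ≤ P ℓ u)
    (hPsupp : ∀ ℓ u, n < u → P ℓ u = 0)
    (hP0 : ∀ u, P 0 u = if u = n then 1 else 0)
    (hPstep : ∀ ℓ, ℓ < S * n → ∀ u,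
      P (ℓ + 1) u =
        P ℓ (u + 1) * (((u : ℝ) + 1) / ((n : ℝ) - (ℓ / S : ℕ)))
          + P ℓ u * (1 - (u : ℝ) / ((n : ℝ) - (ℓ / S : ℕ))))
    (ℓ : ℕ) (hℓ : ℓ ≤ S * n) :
    (∑ u ∈ Finset.range (n + 1), (u : ℝ) * P ℓ u)
      = (n : ℝ) * ∏ i ∈ Finset.range ℓ, (1 - 1 / ((n : ℝ) - (i / S : ℕ))) := by
  induction ℓ with
  | zero =>
    have h : ∀ u ∈ Finset.range (n + 1), (u : ℝ) * P 0 u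
        = if u = n then (n : ℝ) else 0 := by
      intro u _
      rw [hP0]
      split <;> simp_all
    rw [Finset.sum_congr rfl h, Finset.sum_ite_eq' (Finset.range (n + 1)) n
      (fun _ => (n : ℝ))]
    simp
  | succ ℓ ih =>
    have hlt : ℓ < S * n := Nat.lt_of_succ_le hℓ
    have ihE := ih (le_of_lt hlt)
    set d : ℝ := (n : ℝ) - (ℓ / S : ℕ) with hdd
    have hdivlt : ℓ / S < n := by
      rw [Nat.div_lt_iff_lt_mul hS, Nat.mul_comm]; exact hlt
    have hd0 : d ≠ 0 := by
      have : ((ℓ / S : ℕ) : ℝ) < (n : ℝ) := by exact_mod_cast hdivlt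
      rw [hdd]; linarith
    have hsupp : P ℓ (n + 1) = 0 := hPsupp ℓ (n + 1) (by omega)
    -- index shift identity
    have hshift : ∑ u ∈ Finset.range (n + 1), (u : ℝ) * ((u : ℝ) + 1) * P ℓ (u + 1)
        = ∑ u ∈ Finset.range (n + 1), ((u : ℝ) - 1) * (u : ℝ) * P ℓ u := by
      have h1 := Finset.sum_range_succ' (fun u => ((u : ℝ) - 1) * (u : ℝ) * P ℓ u) (n + 1)
      have h2 := Finset.sum_range_succ (fun u => ((u : ℝ) - 1) * (u : ℝ) * P ℓ u) (n + 1)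
      have h3 : ∀ u, ((((u : ℕ) + 1 : ℕ) : ℝ) - 1) * (((u : ℕ) + 1 : ℕ) : ℝ) * P ℓ (u + 1)
          = (u : ℝ) * ((u : ℝ) + 1) * P ℓ (u + 1) := by
        intro u; push_cast; ring
      simp only [h3] at h1
      simp only [hsupp] at h2
      simp only [Nat.cast_zero, mul_zero, zero_mul, add_zero] at h1 h2
      linarith [h1, h2]
    have estep : ∀ u ∈ Finset.range (n + 1), (u : ℝ) * P (ℓ + 1) u
        = (1 / d) * ((u : ℝ) * ((u : ℝ) + 1) * P ℓ (u + 1))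
          + ((u : ℝ) * P ℓ u - (1 / d) * ((u : ℝ) * (u : ℝ) * P ℓ u)) := by
      intro u _
      rw [hPstep ℓ hlt u, ← hdd]
      field_simp
    have hAB : (∑ u ∈ Finset.range (n + 1), ((u : ℝ) - 1) * (u : ℝ) * P ℓ u)
        - (∑ u ∈ Finset.range (n + 1), (u : ℝ) * (u : ℝ) * P ℓ u)
        = -(∑ u ∈ Finset.range (n + 1), (u : ℝ) * P ℓ u) := by
      rw [← Finset.sum_sub_distrib, ← Finset.sum_neg_distrib]
      apply Finset.sum_congr rfl
      intro u _; ring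
    have key : (∑ u ∈ Finset.range (n + 1), (u : ℝ) * P (ℓ + 1) u)
        = (1 - 1 / d) * ∑ u ∈ Finset.range (n + 1), (u : ℝ) * P ℓ u := by
      rw [Finset.sum_congr rfl estep, Finset.sum_add_distrib, Finset.sum_sub_distrib,
        ← Finset.mul_sum, ← Finset.mul_sum, hshift]
      set A := ∑ u ∈ Finset.range (n + 1), ((u : ℝ) - 1) * (u : ℝ) * P ℓ u
      set B := ∑ u ∈ Finset.range (n + 1), (u : ℝ) * (u : ℝ) * P ℓ u
      set E := ∑ u ∈ Finset.range (n + 1), (u : ℝ) * P ℓ u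
      calc (1 / d) * A + (E - (1 / d) * B) = E + (1 / d) * (A - B) := by ring
        _ = E + (1 / d) * (-E) := by rw [hAB]
        _ = (1 - 1 / d) * E := by ring
    rw [key, ihE, Finset.prod_range_succ, ← hdd]
    ring
end

section
/- For every positive integer $S$, every positive integer $n$, and every $0 \le \ell \le Sn$, the expected number of unseen symbols satisfies $\mathbb{E}[U_\ell] \le n\left(1 - \frac{\ell}{Sn}\right)^S$. -/
open Finset

lemma key_amgm (S m r : ℕ) (hS : 0 < S) (hr : r ≤ S) (hm : 1 ≤ m) :
    (S:ℝ)^S * ((m:ℝ)^(S-r) * ((m:ℝ)-1)^r) ≤ ((S:ℝ)*m - r)^S := by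
  have hm1 : (1:ℝ) ≤ (m:ℝ) := by exact_mod_cast hm
  have hb : (0:ℝ) ≤ (m:ℝ) - 1 := by linarith
  have ha : (0:ℝ) ≤ (m:ℝ) := by linarith
  have hSpos : (0:ℝ) < S := by exact_mod_cast hS
  have hrS : (r:ℝ) ≤ S := by exact_mod_cast hr
  have hw1 : (0:ℝ) ≤ ((S:ℝ)-r)/S := div_nonneg (by linarith) hSpos.le
  have hw2 : (0:ℝ) ≤ (r:ℝ)/S := by positivity
  have hsum : ((S:ℝ)-r)/S + (r:ℝ)/S = 1 := by field_simp; ring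
  have h := Real.geom_mean_le_arith_mean2_weighted hw1 hw2 ha hb hsum
  have hC : ((S:ℝ)-r)/S * m + (r:ℝ)/S * ((m:ℝ)-1) = ((S:ℝ)*m - r)/S := by
    field_simp; ring
  rw [hC] at h
  have hLnn : (0:ℝ) ≤ (m:ℝ) ^ (((S:ℝ)-r)/S) * ((m:ℝ)-1) ^ ((r:ℝ)/S) := by positivity
  have h2 := pow_le_pow_left₀ hLnn h S
  have hL : ((m:ℝ) ^ (((S:ℝ)-r)/S) * ((m:ℝ)-1) ^ ((r:ℝ)/S)) ^ S
      = (m:ℝ)^(S-r) * ((m:ℝ)-1)^r := by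
    rw [mul_pow, ← Real.rpow_natCast ((m:ℝ) ^ (((S:ℝ)-r)/S)) S,
        ← Real.rpow_natCast (((m:ℝ)-1) ^ ((r:ℝ)/S)) S,
        ← Real.rpow_mul ha, ← Real.rpow_mul hb]
    rw [div_mul_cancel₀ _ (ne_of_gt hSpos), div_mul_cancel₀ _ (ne_of_gt hSpos)]
    rw [show (S:ℝ) - r = ((S-r : ℕ):ℝ) by push_cast [Nat.cast_sub hr]; ring]
    rw [Real.rpow_natCast, Real.rpow_natCast]
  rw [hL] at h2
  have h3 : (((S:ℝ)*m - r)/S)^S = ((S:ℝ)*m - r)^S / (S:ℝ)^S := div_pow _ _ _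
  rw [h3] at h2
  rw [mul_comm]
  exact (le_div_iff₀ (by positivity)).mp h2

lemma exp_step (n S : ℕ) (hS : 0 < S) (P : ℕ → ℕ → ℝ)
    (hPsupp : ∀ ℓ u, n < u → P ℓ u = 0)
    (hPstep : ∀ ℓ, ℓ < S * n → ∀ u,
      P (ℓ + 1) u =
        P ℓ (u + 1) * (((u : ℝ) + 1) / ((n : ℝ) - (ℓ / S : ℕ)))
          + P ℓ u * (1 - (u : ℝ) / ((n : ℝ) - (ℓ / S : ℕ))))
    (ℓ : ℕ) (hℓ : ℓ < S * n) :
    ∑ u ∈ range (n+1), (u:ℝ) * P (ℓ+1) u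
      = (1 - 1/((n:ℝ) - (ℓ/S : ℕ))) * ∑ u ∈ range (n+1), (u:ℝ) * P ℓ u := by
  have hq : ℓ / S < n := (Nat.div_lt_iff_lt_mul hS).mpr (by rw [Nat.mul_comm]; exact hℓ)
  set d : ℝ := (n:ℝ) - (ℓ/S : ℕ) with hd
  have hdpos : (0:ℝ) < d := by
    rw [hd]; have : ((ℓ/S : ℕ):ℝ) < n := by exact_mod_cast hq
    linarith
  have hdne : d ≠ 0 := ne_of_gt hdpos
  set g : ℕ → ℝ := fun v => ((v:ℝ)-1) * (P ℓ v * ((v:ℝ)/d)) with hg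
  have step1 : ∑ u ∈ range (n+1), (u:ℝ) * (P ℓ (u+1) * (((u:ℝ)+1)/d))
      = ∑ v ∈ range (n+1), g v := by
    have e1 : ∀ u : ℕ, (u:ℝ) * (P ℓ (u+1) * (((u:ℝ)+1)/d)) = g (u+1) := by
      intro u; simp only [hg]; push_cast; ring
    simp only [e1]
    have e2 : ∑ u ∈ range (n+2), g u = ∑ u ∈ range (n+1), g (u+1) + g 0 :=
      Finset.sum_range_succ' g (n+1)
    have e3 : ∑ u ∈ range (n+2), g u = ∑ u ∈ range (n+1), g u + g (n+1) :=
      Finset.sum_range_succ g (n+1)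
    have hg0 : g 0 = 0 := by simp [hg]
    have hgn : g (n+1) = 0 := by
      simp only [hg, hPsupp ℓ (n+1) (Nat.lt_succ_self n)]; ring
    rw [hg0, add_zero] at e2
    rw [hgn, add_zero] at e3
    rw [← e2, e3]
  calc ∑ u ∈ range (n+1), (u:ℝ) * P (ℓ+1) u
      = ∑ u ∈ range (n+1), ((u:ℝ) * (P ℓ (u+1) * (((u:ℝ)+1)/d))
          + (u:ℝ) * (P ℓ u * (1 - (u:ℝ)/d))) := by
        refine Finset.sum_congr rfl fun u _ => ?_
        rw [hPstep ℓ hℓ u]; ring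
    _ = ∑ v ∈ range (n+1), g v + ∑ u ∈ range (n+1), (u:ℝ) * (P ℓ u * (1 - (u:ℝ)/d)) := by
        rw [Finset.sum_add_distrib, step1]
    _ = ∑ u ∈ range (n+1), (1 - 1/d) * ((u:ℝ) * P ℓ u) := by
        rw [← Finset.sum_add_distrib]
        refine Finset.sum_congr rfl fun u _ => ?_
        simp only [hg]; field_simp; ring
    _ = (1 - 1/d) * ∑ u ∈ range (n+1), (u:ℝ) * P ℓ u := by
        rw [Finset.mul_sum]

lemma prod_formula (n S : ℕ) (hn : 0 < n) (hS : 0 < S) (ℓ : ℕ) (hℓ : ℓ ≤ S * n) :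
    ∏ i ∈ range ℓ, (1 - 1/((n:ℝ) - (i/S : ℕ)))
      = (((n - ℓ/S)^(S - ℓ%S) * (n - ℓ/S - 1)^(ℓ%S) : ℕ) : ℝ) / (n:ℝ)^S := by
  induction ℓ with
  | zero =>
      simp only [range_zero, prod_empty, Nat.zero_div, Nat.zero_mod, Nat.sub_zero, pow_zero,
        mul_one]
      rw [Nat.cast_pow, div_self (by positivity)]
  | succ ℓ ih =>
      have hℓ' : ℓ < S * n := lt_of_lt_of_le (Nat.lt_succ_self _) hℓ
      have hq : ℓ / S < n := (Nat.div_lt_iff_lt_mul hS).mpr (by rw [Nat.mul_comm]; exact hℓ')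
      set q := ℓ / S with hqdef
      set r := ℓ % S with hrdef
      have hdm : S * q + r = ℓ := Nat.div_add_mod ℓ S
      have hrS : r < S := Nat.mod_lt ℓ hS
      set m := n - q with hmdef
      have hm1 : 1 ≤ m := by omega
      have hcm : ((m:ℕ):ℝ) = (n:ℝ) - (q:ℕ) := by
        rw [hmdef, Nat.cast_sub hq.le]
      have hmne : ((m:ℕ):ℝ) ≠ 0 := by
        have : (0:ℕ) < m := hm1; positivity
      have hfac : 1 - 1/((n:ℝ) - (q:ℕ)) = ((m - 1 : ℕ):ℝ) / (m:ℝ) := by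
        rw [Nat.cast_sub hm1, ← hcm]
        field_simp
        simp
      rw [prod_range_succ, ih hℓ'.le, hfac]
      by_cases hcase : r + 1 = S
      · -- ℓ + 1 = S * (q + 1)
        have hℓ1 : ℓ + 1 = S * (q + 1) := by
          rw [Nat.mul_add, Nat.mul_one]; omega
        have hq1 : (ℓ+1) / S = q + 1 := by rw [hℓ1, Nat.mul_div_cancel_left _ hS]
        have hr1 : (ℓ+1) % S = 0 := by rw [hℓ1, Nat.mul_mod_right]
        rw [hq1, hr1]
        have hSr : S - r = 1 := by omega
        have hnm : n - (q+1) = m - 1 := by omega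
        rw [hSr, hnm, Nat.sub_zero, pow_zero, mul_one, pow_one,
          show S = r + 1 from hcase.symm]
        push_cast
        field_simp
        ring
      · have hrlt : r + 1 < S := by omega
        have hℓ1 : ℓ + 1 = (r+1) + q * S := by
          have : q * S = S * q := Nat.mul_comm q S
          omega
        have hq1 : (ℓ+1) / S = q := by
          rw [hℓ1, Nat.add_mul_div_right _ _ hS, Nat.div_eq_of_lt hrlt, Nat.zero_add]
        have hr1 : (ℓ+1) % S = r + 1 := by
          rw [hℓ1, Nat.add_mul_mod_self_right, Nat.mod_eq_of_lt hrlt]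
        rw [hq1, hr1]
        have hpow : S - r = (S - (r+1)) + 1 := by omega
        rw [hpow, pow_succ]
        push_cast
        field_simp
        ring

/-- For the coupon-collector Markov chain (`U 0 = n`; `U (ℓ+1) = U ℓ - 1` with
probability `U ℓ / (n - ⌊ℓ/S⌋)`, else unchanged; `P ℓ u = Pr[U ℓ = u]`),
the expected number of unseen symbols satisfies
`E[U ℓ] ≤ n * (1 - ℓ/(S*n))^S` for all `0 ≤ ℓ ≤ S*n`. -/
theorem stmt_2 (n S : ℕ) (hn : 0 < n) (hS : 0 < S)
    (P : ℕ → ℕ → ℝ)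
    (hPnn : ∀ ℓ u, 0 ≤ P ℓ u)
    (hPsupp : ∀ ℓ u, n < u → P ℓ u = 0)
    (hP0 : ∀ u, P 0 u = if u = n then 1 else 0)
    (hPstep : ∀ ℓ, ℓ < S * n → ∀ u,
      P (ℓ + 1) u =
        P ℓ (u + 1) * (((u : ℝ) + 1) / ((n : ℝ) - (ℓ / S : ℕ)))
          + P ℓ u * (1 - (u : ℝ) / ((n : ℝ) - (ℓ / S : ℕ))))
    (ℓ : ℕ) (hℓ : ℓ ≤ S * n) :
    (∑ u ∈ Finset.range (n + 1), (u : ℝ) * P ℓ u)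
      ≤ (n : ℝ) * (1 - (ℓ : ℝ) / ((S : ℝ) * n)) ^ S := by
  -- Expectation formula
  have hformula : ∀ k, k ≤ S * n →
      ∑ u ∈ range (n+1), (u:ℝ) * P k u
        = n * ∏ i ∈ range k, (1 - 1/((n:ℝ) - (i/S : ℕ))) := by
    intro k
    induction k with
    | zero =>
        intro _
        simp only [range_zero, prod_empty, mul_one, hP0]
        rw [Finset.sum_eq_single n]
        · simp
        · intro b _ hb; simp [hb]
        · intro h; exact absurd (self_mem_range_succ n) h
    | succ k ih =>
        intro hk
        have hk' : k < S * n := lt_of_lt_of_le (Nat.lt_succ_self _) hk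
        rw [exp_step n S hS P hPsupp hPstep k hk', ih hk'.le, prod_range_succ]
        ring
  rw [hformula ℓ hℓ, prod_formula n S hn hS ℓ hℓ]
  set q := ℓ / S with hqdef
  set r := ℓ % S with hrdef
  have hdm : S * q + r = ℓ := Nat.div_add_mod ℓ S
  have hrS : r < S := Nat.mod_lt ℓ hS
  have hqn : q ≤ n := by
    have h1 : ℓ / S ≤ (S * n) / S := Nat.div_le_div_right hℓ
    rwa [Nat.mul_div_cancel_left n hS] at h1
  set m := n - q with hmdef
  have hsnpos : (0:ℝ) < (S:ℝ) * n := by positivity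
  by_cases hm0 : m = 0
  · -- then q = n and r = 0, so ℓ = S * n and both sides vanish
    have hqn' : q = n := by omega
    have hr0 : r = 0 := by
      have : S * q + r ≤ S * n := by rw [hdm]; exact hℓ
      rw [hqn'] at this; omega
    have hℓeq : ℓ = S * n := by rw [← hdm, hqn', hr0, Nat.add_zero]
    have h1 : ((m ^ (S - r) * (m - 1) ^ r : ℕ) : ℝ) = 0 := by
      rw [hm0, hr0, Nat.sub_zero, zero_pow hS.ne', Nat.zero_mul, Nat.cast_zero]
    rw [h1, zero_div, mul_zero]
    have h2 : 1 - (ℓ:ℝ)/((S:ℝ)*n) = 0 := by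
      rw [hℓeq]; push_cast; field_simp; simp
    rw [h2, zero_pow hS.ne', mul_zero]
  · have hm1 : 1 ≤ m := Nat.one_le_iff_ne_zero.mpr hm0
    have hcm : ((m:ℕ):ℝ) = (n:ℝ) - (q:ℕ) := by rw [hmdef, Nat.cast_sub hqn]
    have hrew : 1 - (ℓ:ℝ)/((S:ℝ)*n) = ((S:ℝ)*m - r)/((S:ℝ)*n) := by
      have hl : (ℓ:ℝ) = (S:ℝ)*q + r := by exact_mod_cast hdm.symm
      rw [hl, hcm]; field_simp; ring
    rw [hrew]
    gcongr ?_ * ?_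
    · rw [div_pow, mul_pow]
      rw [div_le_div_iff₀ (by positivity) (by positivity)]
      have hcast : ((m ^ (S - r) * (m - 1) ^ r : ℕ) : ℝ)
          = (m:ℝ)^(S-r) * ((m:ℝ)-1)^r := by
        push_cast [Nat.cast_sub hm1]; ring
      calc ((m ^ (S - r) * (m - 1) ^ r : ℕ) : ℝ) * ((S:ℝ)^S * (n:ℝ)^S)
          = ((S:ℝ)^S * ((m:ℝ)^(S-r) * ((m:ℝ)-1)^r)) * (n:ℝ)^S := by
            rw [hcast]; ring
        _ ≤ ((S:ℝ)*m - r)^S * (n:ℝ)^S := by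
            exact mul_le_mul_of_nonneg_right (key_amgm S m r hS hrS.le hm1) (by positivity)
end

section
/- Let $(U_\ell)$ be the Markov chain on $\{0,\dots,n\}$ with $U_0 = n$ and $U_{\ell+1} = U_\ell - 1$ with probability $U_\ell/(n-\lfloor \ell/S\rfloor)$, else $U_{\ell+1} = U_\ell$, and let $a_\ell = 1 - 1/(n - \lfloor \ell/S\rfloor)$. Then $\mathrm{Var}(U_{\ell+1}) \le (1 - a_\ell)\,\mathbb{E}[U_\ell] + a_\ell^2\, \mathrm{Var}(U_\ell)$. -/
/-- For the coupon-collector Markov chain (`U 0 = n`; `U (ℓ+1) = U ℓ - 1` with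
probability `U ℓ / (n - ⌊ℓ/S⌋)`, else unchanged; `P ℓ u = Pr[U ℓ = u]`) and
`a ℓ = 1 - 1/(n - ⌊ℓ/S⌋)`, writing `Var(U ℓ) = E[U ℓ²] - E[U ℓ]²`, one has
`Var(U (ℓ+1)) ≤ (1 - a ℓ) * E[U ℓ] + (a ℓ)² * Var(U ℓ)`. -/
theorem stmt_5 (n S : ℕ) (hn : 0 < n) (hS : 0 < S)
    (P : ℕ → ℕ → ℝ)
    (hPnn : ∀ ℓ u, 0 ≤ P ℓ u)
    (hPsupp : ∀ ℓ u, n < u → P ℓ u = 0)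
    (hP0 : ∀ u, P 0 u = if u = n then 1 else 0)
    (hPstep : ∀ ℓ, ℓ < S * n → ∀ u,
      P (ℓ + 1) u =
        P ℓ (u + 1) * (((u : ℝ) + 1) / ((n : ℝ) - (ℓ / S : ℕ)))
          + P ℓ u * (1 - (u : ℝ) / ((n : ℝ) - (ℓ / S : ℕ))))
    (ℓ : ℕ) (hℓ : ℓ < S * n) :
    (∑ u ∈ Finset.range (n + 1), (u : ℝ) ^ 2 * P (ℓ + 1) u)
        - (∑ u ∈ Finset.range (n + 1), (u : ℝ) * P (ℓ + 1) u) ^ 2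
      ≤ (1 - (1 - 1 / ((n : ℝ) - (ℓ / S : ℕ))))
            * (∑ u ∈ Finset.range (n + 1), (u : ℝ) * P ℓ u)
        + (1 - 1 / ((n : ℝ) - (ℓ / S : ℕ))) ^ 2
            * ((∑ u ∈ Finset.range (n + 1), (u : ℝ) ^ 2 * P ℓ u)
                - (∑ u ∈ Finset.range (n + 1), (u : ℝ) * P ℓ u) ^ 2) := by
  set m : ℝ := (n : ℝ) - (ℓ / S : ℕ) with hm_def
  have hdiv : ℓ / S < n := Nat.div_lt_of_lt_mul hℓ
  have hdiv' : (ℓ / S : ℕ) + 1 ≤ n := hdiv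
  have hm1 : (1 : ℝ) ≤ m := by
    have : ((ℓ / S : ℕ) : ℝ) + 1 ≤ (n : ℝ) := by exact_mod_cast hdiv'
    simp only [hm_def]; linarith
  have hm0 : m ≠ 0 := by linarith
  -- shift lemma
  have shift : ∀ g : ℕ → ℝ, g 0 = 0 →
      ∑ u ∈ Finset.range (n + 1), g (u + 1) * P ℓ (u + 1)
        = ∑ u ∈ Finset.range (n + 1), g u * P ℓ u := by
    intro g hg0
    have h1 : ∑ u ∈ Finset.range (n + 2), g u * P ℓ u
        = (∑ u ∈ Finset.range (n + 1), g (u + 1) * P ℓ (u + 1)) + g 0 * P ℓ 0 :=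
      Finset.sum_range_succ' _ (n + 1)
    have h2 : ∑ u ∈ Finset.range (n + 2), g u * P ℓ u
        = (∑ u ∈ Finset.range (n + 1), g u * P ℓ u) + g (n + 1) * P ℓ (n + 1) :=
      Finset.sum_range_succ _ (n + 1)
    rw [hPsupp ℓ (n + 1) (by omega)] at h2
    rw [hg0] at h1
    rw [h1] at h2
    linarith
  set E1 : ℝ := ∑ u ∈ Finset.range (n + 1), (u : ℝ) * P ℓ u with hE1
  set E2 : ℝ := ∑ u ∈ Finset.range (n + 1), (u : ℝ) ^ 2 * P ℓ u with hE2
  have hA : ∑ u ∈ Finset.range (n + 1), (u : ℝ) * P (ℓ + 1) u = (1 - 1 / m) * E1 := by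
    have : ∑ u ∈ Finset.range (n + 1), (u : ℝ) * P (ℓ + 1) u
        = (∑ u ∈ Finset.range (n + 1),
            ((((u + 1 : ℕ) : ℝ) ^ 2 - ((u + 1 : ℕ) : ℝ)) / m) * P ℓ (u + 1))
          + ∑ u ∈ Finset.range (n + 1), ((u : ℝ) - (u : ℝ) ^ 2 / m) * P ℓ u := by
      rw [← Finset.sum_add_distrib]
      refine Finset.sum_congr rfl fun u _ => ?_
      rw [hPstep ℓ hℓ u, ← hm_def]
      push_cast
      field_simp
      ring
    rw [this, shift (fun v => (((v : ℕ) : ℝ) ^ 2 - ((v : ℕ) : ℝ)) / m) (by simp),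
      ← Finset.sum_add_distrib, hE1, Finset.mul_sum]
    refine Finset.sum_congr rfl fun u _ => ?_
    field_simp
    ring
  have hB : ∑ u ∈ Finset.range (n + 1), (u : ℝ) ^ 2 * P (ℓ + 1) u
      = (1 - 2 / m) * E2 + (1 / m) * E1 := by
    have : ∑ u ∈ Finset.range (n + 1), (u : ℝ) ^ 2 * P (ℓ + 1) u
        = (∑ u ∈ Finset.range (n + 1),
            ((((u + 1 : ℕ) : ℝ) ^ 3 - 2 * ((u + 1 : ℕ) : ℝ) ^ 2 + ((u + 1 : ℕ) : ℝ)) / m)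
              * P ℓ (u + 1))
          + ∑ u ∈ Finset.range (n + 1), ((u : ℝ) ^ 2 - (u : ℝ) ^ 3 / m) * P ℓ u := by
      rw [← Finset.sum_add_distrib]
      refine Finset.sum_congr rfl fun u _ => ?_
      rw [hPstep ℓ hℓ u, ← hm_def]
      push_cast
      field_simp
      ring
    rw [this, shift (fun v => (((v : ℕ) : ℝ) ^ 3 - 2 * ((v : ℕ) : ℝ) ^ 2 + ((v : ℕ) : ℝ)) / m)
        (by simp), ← Finset.sum_add_distrib, hE1, hE2, Finset.mul_sum, Finset.mul_sum,
      ← Finset.sum_add_distrib]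
    refine Finset.sum_congr rfl fun u _ => ?_
    field_simp
    ring
  have hE2nn : 0 ≤ E2 := Finset.sum_nonneg fun u _ => mul_nonneg (by positivity) (hPnn ℓ u)
  rw [hA, hB]
  have hsq : 0 ≤ (1 / m) ^ 2 * E2 := mul_nonneg (by positivity) hE2nn
  have hring : (1 - (1 - 1 / m)) * E1 + (1 - 1 / m) ^ 2 * (E2 - E1 ^ 2)
      - ((1 - 2 / m) * E2 + 1 / m * E1 - ((1 - 1 / m) * E1) ^ 2) = (1 / m) ^ 2 * E2 := by
    ring
  linarith [hsq, hring]
end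

section
/- Let $(U_\ell)$ be the coupon-collector Markov chain with $n$ symbols and $S$ servers as above. Then there exists a constant $C$ (depending on $S$ and the time horizon ratio) such that $\mathrm{Var}(U_\ell) \le C \cdot n$ for all $\ell$ with $n - \lfloor \ell/S \rfloor \ge 1$; i.e., $\mathrm{Var}(U_\ell) = O(n)$. -/
/-!
Write `m₁, m₂` for the first two moments of the law of `U_ℓ` and `d = n - ⌊ℓ/S⌋`. One step of the
chain maps `m₁ ↦ (1 - 1/d) m₁` and `m₂ ↦ (1 - 2/d) m₂ + m₁/d`, hence
`Var ↦ (1 - 1/d)² Var + m₁/d - m₂/d²`. Since `m₁ ≤ d` (the mean drops by at least one per step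
while `d` drops by at most one), the variance grows by at most one per step, so
`Var(U_ℓ) ≤ ℓ < S n`.
-/

open Finset

namespace CouponCollector

/-- `q` is the law of the chain one step after `p`, when `d` symbols remain. -/
def Step (d : ℝ) (p q : ℕ → ℝ) : Prop :=
  ∀ u : ℕ, q u = p (u + 1) * (((u : ℝ) + 1) / d) + p u * (1 - (u : ℝ) / d)

noncomputable def moment (n k : ℕ) (p : ℕ → ℝ) : ℝ :=
  ∑ u ∈ range (n + 1), (u : ℝ) ^ k * p u

noncomputable def variance (n : ℕ) (p : ℕ → ℝ) : ℝ :=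
  moment n 2 p - moment n 1 p ^ 2

variable {n : ℕ} {d : ℝ} {p q : ℕ → ℝ}

theorem variance_eq_sum_sq (hmass : moment n 0 p = 1) :
    variance n p = ∑ u ∈ range (n + 1), ((u : ℝ) - moment n 1 p) ^ 2 * p u := by
  have expand : ∀ u ∈ range (n + 1), ((u : ℝ) - moment n 1 p) ^ 2 * p u =
      (u : ℝ) ^ 2 * p u - 2 * moment n 1 p * ((u : ℝ) ^ 1 * p u)
        + moment n 1 p ^ 2 * ((u : ℝ) ^ 0 * p u) := fun u _ => by ring
  rw [sum_congr rfl expand, sum_add_distrib, sum_sub_distrib, ← mul_sum, ← mul_sum]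
  simp only [variance, moment] at hmass ⊢
  rw [hmass]
  ring

theorem variance_nonneg (hp : ∀ u, 0 ≤ p u) (hmass : moment n 0 p = 1) :
    0 ≤ variance n p := by
  rw [variance_eq_sum_sq hmass]
  exact sum_nonneg fun u _ => mul_nonneg (sq_nonneg _) (hp u)

theorem moment_nonneg (k : ℕ) (hp : ∀ u, 0 ≤ p u) : 0 ≤ moment n k p :=
  sum_nonneg fun u _ => mul_nonneg (by positivity) (hp u)

theorem sum_mul_of_step (F : ℝ → ℝ) (hp : p (n + 1) = 0) (h : Step d p q) :
    ∑ u ∈ range (n + 1), F u * q u =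
      ∑ u ∈ range (n + 1), (F (u - 1) * (u / d) + F u * (1 - u / d)) * p u := by
  have shift : ∑ u ∈ range (n + 1), F u * (p (u + 1) * ((u + 1) / d)) =
      ∑ u ∈ range (n + 1), F (u - 1) * (u / d) * p u := by
    have h1 := sum_range_succ' (fun v : ℕ => F ((v : ℝ) - 1) * (v / d) * p v) (n + 1)
    rw [sum_range_succ, hp] at h1
    push_cast at h1
    simp only [add_sub_cancel_right, mul_zero, zero_mul, add_zero, zero_div] at h1
    rw [h1]
    exact sum_congr rfl fun u _ => by ring
  unfold Step at h
  simp only [h, mul_add, sum_add_distrib, shift, add_mul]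
  congr 1
  exact sum_congr rfl fun u _ => by ring

theorem moment_zero_of_step (hp : p (n + 1) = 0) (h : Step d p q) :
    moment n 0 q = moment n 0 p := by
  have key := sum_mul_of_step (fun _ => 1) hp h
  simp only [moment, pow_zero, key]
  exact sum_congr rfl fun u _ => by ring

theorem moment_one_of_step (hp : p (n + 1) = 0) (h : Step d p q) :
    moment n 1 q = (1 - 1 / d) * moment n 1 p := by
  have key := sum_mul_of_step (fun x => x) hp h
  simp only [moment, pow_one, key, mul_sum]
  exact sum_congr rfl fun u _ => by ring

theorem moment_two_of_step (hp : p (n + 1) = 0) (h : Step d p q) :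
    moment n 2 q = (1 - 2 / d) * moment n 2 p + moment n 1 p / d := by
  have key := sum_mul_of_step (fun x => x ^ 2) hp h
  simp only [moment, key, mul_sum, sum_div, ← sum_add_distrib]
  exact sum_congr rfl fun u _ => by ring

theorem variance_of_step (hp : p (n + 1) = 0) (h : Step d p q) :
    variance n q =
      (1 - 1 / d) ^ 2 * variance n p + moment n 1 p / d - moment n 2 p / d ^ 2 := by
  rw [variance, variance, moment_one_of_step hp h, moment_two_of_step hp h]
  ring

theorem moment_one_le_of_step (hd : 1 ≤ d) (hm : moment n 1 p ≤ d) (hp : p (n + 1) = 0)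
    (h : Step d p q) : moment n 1 q ≤ d - 1 := by
  have hd0 : d ≠ 0 := by positivity
  calc moment n 1 q = (1 - 1 / d) * moment n 1 p := moment_one_of_step hp h
    _ ≤ (1 - 1 / d) * d := by
      gcongr
      rw [sub_nonneg, div_le_one (by positivity)]
      exact hd
    _ = d - 1 := by field_simp

theorem variance_le_of_step (hd : 1 ≤ d) (hm : moment n 1 p ≤ d) (hvar : 0 ≤ variance n p)
    (hm₂ : 0 ≤ moment n 2 p) (hp : p (n + 1) = 0) (h : Step d p q) :
    variance n q ≤ variance n p + 1 := by
  have hd0 : 0 < d := by linarith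
  have hcontract : (1 - 1 / d) ^ 2 ≤ 1 := by
    have : 1 / d ≤ 1 := (div_le_one hd0).mpr hd
    have : 0 < 1 / d := by positivity
    nlinarith
  have hmean : moment n 1 p / d ≤ 1 := (div_le_one hd0).mpr hm
  have hsecond : 0 ≤ moment n 2 p / d ^ 2 := by positivity
  rw [variance_of_step hp h]
  nlinarith [mul_le_of_le_one_left hvar hcontract]

theorem moment_bounds_of_chain {P : ℕ → ℕ → ℝ} {d : ℕ → ℝ} (N : ℕ) (hP : ∀ ℓ u, 0 ≤ P ℓ u)
    (htop : ∀ ℓ, P ℓ (n + 1) = 0) (hinit : ∀ u, P 0 u = if u = n then 1 else 0)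
    (hstep : ∀ ℓ < N, Step (d ℓ) (P ℓ) (P (ℓ + 1))) (hd : ∀ ℓ < N, 1 ≤ d ℓ)
    (hd_zero : (n : ℝ) ≤ d 0) (hd_succ : ∀ ℓ < N, d ℓ - 1 ≤ d (ℓ + 1)) :
    ∀ ℓ ≤ N, moment n 0 (P ℓ) = 1 ∧ moment n 1 (P ℓ) ≤ d ℓ ∧ variance n (P ℓ) ≤ ℓ := by
  intro ℓ hℓ
  induction ℓ with
  | zero =>
    have hmoment : ∀ k, moment n k (P 0) = (n : ℝ) ^ k := fun k => by
      simp [moment, hinit]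
    simp only [variance, hmoment]
    norm_num [hd_zero]
  | succ ℓ ih =>
    obtain ⟨hmass, hmean, hvar⟩ := ih (by omega)
    have hlt : ℓ < N := by omega
    refine ⟨?_, ?_, ?_⟩
    · rw [moment_zero_of_step (htop ℓ) (hstep ℓ hlt), hmass]
    · linarith [moment_one_le_of_step (hd ℓ hlt) hmean (htop ℓ) (hstep ℓ hlt), hd_succ ℓ hlt]
    · have := variance_le_of_step (hd ℓ hlt) hmean (variance_nonneg (hP ℓ) hmass)
        (moment_nonneg 2 (hP ℓ)) (htop ℓ) (hstep ℓ hlt)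
      push_cast
      linarith

end CouponCollector

open CouponCollector in
/-- For the coupon-collector Markov chain with `n` symbols and `S` servers
(`U 0 = n`; `U (ℓ+1) = U ℓ - 1` with probability `U ℓ / (n - ⌊ℓ/S⌋)`, else
unchanged; `P ℓ u = Pr[U ℓ = u]`), there is a constant `C` (depending only on
`S`, uniformly in `n`) such that `Var(U ℓ) ≤ C * n` for all `ℓ` with
`n - ⌊ℓ/S⌋ ≥ 1`, i.e. `Var(U ℓ) = O(n)`. -/
theorem stmt_6 (S : ℕ) (hS : 0 < S) :
    ∃ C : ℝ, ∀ n : ℕ, 0 < n → ∀ P : ℕ → ℕ → ℝ,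
      (∀ ℓ u, 0 ≤ P ℓ u) →
      (∀ ℓ u, n < u → P ℓ u = 0) →
      (∀ u, P 0 u = if u = n then 1 else 0) →
      (∀ ℓ, ℓ < S * n → ∀ u,
        P (ℓ + 1) u =
          P ℓ (u + 1) * (((u : ℝ) + 1) / ((n : ℝ) - (ℓ / S : ℕ)))
            + P ℓ u * (1 - (u : ℝ) / ((n : ℝ) - (ℓ / S : ℕ)))) →
      ∀ ℓ : ℕ, ℓ / S < n →
        (∑ u ∈ Finset.range (n + 1), (u : ℝ) ^ 2 * P ℓ u)
            - (∑ u ∈ Finset.range (n + 1), (u : ℝ) * P ℓ u) ^ 2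
          ≤ C * n := by
  refine ⟨S, fun n _ P hP hsupp hinit hrec ℓ hℓ => ?_⟩
  have hℓS : ℓ < S * n := by rw [mul_comm]; exact (Nat.div_lt_iff_lt_mul hS).mp hℓ
  have hd : ∀ j < ℓ, 1 ≤ (n : ℝ) - (j / S : ℕ) := fun j hj => by
    have : j / S + 1 ≤ n := (Nat.div_le_div_right hj.le).trans_lt hℓ
    rw [le_sub_iff_add_le']
    exact_mod_cast this
  have hd_succ : ∀ j < ℓ, (n : ℝ) - (j / S : ℕ) - 1 ≤ (n : ℝ) - ((j + 1) / S : ℕ) := fun j _ => by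
    have : (j + 1) / S ≤ j / S + 1 :=
      (Nat.div_le_div_right (by omega)).trans (Nat.add_div_right j hS).le
    have : (((j + 1) / S : ℕ) : ℝ) ≤ (j / S : ℕ) + 1 := by exact_mod_cast this
    linarith
  obtain ⟨-, -, hvar⟩ := moment_bounds_of_chain (d := fun j => (n : ℝ) - (j / S : ℕ)) ℓ hP
    (fun j => hsupp j (n + 1) (by omega)) hinit (fun j hj => hrec j (by omega)) hd
    (by simp) hd_succ ℓ le_rfl
  have : (ℓ : ℝ) ≤ S * n := by exact_mod_cast hℓS.le
  simp only [variance, moment, pow_one] at hvar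
  linarith
end

section
/- Fix a positive integer $S$ and $\tau \in [0, S)$. Let $U^{(n)}_\tau = \frac{1}{n} U_{\lfloor n\tau \rfloor}$ for the coupon-collector Markov chain with $n$ symbols and $S$ servers. Then $\lim_{n\to\infty} \mathbb{E}[U^{(n)}_\tau] = \left(1 - \frac{\tau}{S}\right)^S$. -/
open Finset Filter

lemma cc_step (S : ℕ) (P : ℕ → ℕ → ℕ → ℝ)
    (hPsupp : ∀ n ℓ u, n < u → P n ℓ u = 0)
    (hPstep : ∀ n, 0 < n → ∀ ℓ, ℓ < S * n → ∀ u,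
      P n (ℓ + 1) u =
        P n ℓ (u + 1) * (((u : ℝ) + 1) / ((n : ℝ) - (ℓ / S : ℕ)))
          + P n ℓ u * (1 - (u : ℝ) / ((n : ℝ) - (ℓ / S : ℕ))))
    (n : ℕ) (hn : 0 < n) (ℓ : ℕ) (hℓ : ℓ < S * n) :
    ∑ u ∈ range (n+1), (u:ℝ) * P n (ℓ+1) u
      = (∑ u ∈ range (n+1), (u:ℝ) * P n ℓ u) * (1 - 1/((n:ℝ) - (ℓ/S : ℕ))) := by
  set d : ℝ := (n:ℝ) - (ℓ/S : ℕ) with hd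
  have hdiv : ℓ / S < n := Nat.div_lt_of_lt_mul (Nat.mul_comm S n ▸ hℓ)
  have hd1 : (1:ℝ) ≤ d := by
    have : ((ℓ/S : ℕ) : ℝ) + 1 ≤ (n:ℝ) := by exact_mod_cast hdiv
    simp [hd]; linarith
  have hdne : d ≠ 0 := by linarith
  set g : ℕ → ℝ := fun v => ((v:ℝ)-1) * (P n ℓ v * ((v:ℝ)/d)) with hg
  have shift : ∑ u ∈ range (n+1), (u:ℝ) * (P n ℓ (u+1) * (((u:ℝ)+1)/d))
      = ∑ u ∈ range (n+1), g u := by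
    have h1 : ∀ u ∈ range (n+1), (u:ℝ) * (P n ℓ (u+1) * (((u:ℝ)+1)/d)) = g (u+1) := by
      intro u _
      simp only [hg]
      push_cast
      ring
    rw [Finset.sum_congr rfl h1]
    have h2 := Finset.sum_range_succ' g (n+1)
    have hg0 : g 0 = 0 := by simp [hg]
    have hgn : g (n+1) = 0 := by
      simp [hg, hPsupp n ℓ (n+1) (Nat.lt_succ_self n)]
    rw [Finset.sum_range_succ] at h2
    rw [hg0, hgn, add_zero] at h2
    linarith [h2]
  calc ∑ u ∈ range (n+1), (u:ℝ) * P n (ℓ+1) u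
      = ∑ u ∈ range (n+1), ((u:ℝ) * (P n ℓ (u+1) * (((u:ℝ)+1)/d))
          + (u:ℝ) * (P n ℓ u * (1 - (u:ℝ)/d))) := by
        refine Finset.sum_congr rfl fun u _ => ?_
        rw [hPstep n hn ℓ hℓ u]; ring
    _ = ∑ u ∈ range (n+1), g u + ∑ u ∈ range (n+1), (u:ℝ) * (P n ℓ u * (1 - (u:ℝ)/d)) := by
        rw [Finset.sum_add_distrib, shift]
    _ = ∑ u ∈ range (n+1), ((u:ℝ) * P n ℓ u) * (1 - 1/d) := by
        rw [← Finset.sum_add_distrib]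
        refine Finset.sum_congr rfl fun u _ => ?_
        simp only [hg]
        field_simp
        ring
    _ = (∑ u ∈ range (n+1), (u:ℝ) * P n ℓ u) * (1 - 1/d) := by
        rw [← Finset.sum_mul]


lemma cc_tele (S n : ℕ) (hn : 0 < n) (q : ℕ) (hq : q ≤ n) :
    ∏ i ∈ range (q * S), (1 - 1/((n:ℝ) - (i/S : ℕ)))
      = (((n:ℝ) - q)/n) ^ S := by
  have hnn : (n:ℝ) ≠ 0 := by positivity
  induction q with
  | zero => simp [div_self hnn]
  | succ k ih =>
    have hk : k < n := by omega
    have hkr : (k:ℝ) < n := by exact_mod_cast hk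
    have hnk : (n:ℝ) - k ≠ 0 := by linarith
    have hkk : k * S ≤ (k+1) * S := Nat.mul_le_mul_right S (by omega)
    have hsplit : range ((k+1) * S) = range (k*S) ∪ Ico (k*S) ((k+1)*S) := by
      rw [Finset.range_eq_Ico, Finset.range_eq_Ico, Finset.Ico_union_Ico_eq_Ico (Nat.zero_le _) hkk]
    rw [hsplit, Finset.prod_union (by
      rw [Finset.range_eq_Ico]
      exact Finset.Ico_disjoint_Ico_consecutive 0 (k*S) ((k+1)*S)),
      ih (by omega)]
    have hconst : ∀ i ∈ Ico (k*S) ((k+1)*S), (1 - 1/((n:ℝ) - (i/S : ℕ)))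
        = (1 - 1/((n:ℝ) - k)) := by
      intro i hi
      simp only [Finset.mem_Ico] at hi
      have : i / S = k := Nat.div_eq_of_lt_le hi.1 hi.2
      rw [this]
    rw [Finset.prod_congr rfl hconst, Finset.prod_const, Nat.card_Ico]
    have hcard : (k+1)*S - k*S = S := by
      rw [Nat.add_mul, one_mul]; omega
    rw [hcard, ← mul_pow]
    congr 1
    push_cast
    field_simp
    ring


lemma cc_bounds (S : ℕ) (hS : 0 < S) (n m : ℕ) (hn : 0 < n) (hm : m < S * n) :
    ((((n:ℝ) - (m/S : ℕ)) - 1)/n)^S ≤ ∏ i ∈ range m, (1 - 1/((n:ℝ) - (i/S : ℕ)))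
    ∧ ∏ i ∈ range m, (1 - 1/((n:ℝ) - (i/S : ℕ))) ≤ (((n:ℝ) - (m/S : ℕ))/n)^S := by
  set q := m / S with hqdef
  have hqn : q < n := Nat.div_lt_of_lt_mul (Nat.mul_comm S n ▸ hm)
  have hqr : (q:ℝ) < n := by exact_mod_cast hqn
  have hq1 : (q:ℝ) + 1 ≤ n := by exact_mod_cast hqn
  have hnq : (1:ℝ) ≤ (n:ℝ) - q := by linarith
  have hnqne : (n:ℝ) - q ≠ 0 := by linarith
  have hnn : (0:ℝ) < n := by exact_mod_cast hn
  have hqm : q * S ≤ m := Nat.div_mul_le_self m S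
  have hsplit : range m = range (q * S) ∪ Ico (q * S) m := by
    rw [Finset.range_eq_Ico, Finset.range_eq_Ico, Finset.Ico_union_Ico_eq_Ico (Nat.zero_le _) hqm]
  have hdisj : Disjoint (range (q*S)) (Ico (q*S) m) := by
    rw [Finset.range_eq_Ico]
    exact Finset.Ico_disjoint_Ico_consecutive 0 (q*S) m
  set c : ℝ := 1 - 1/((n:ℝ) - q) with hc
  have hc0 : 0 ≤ c := by
    rw [hc, sub_nonneg, div_le_one (by linarith)]
    linarith
  have hc1 : c ≤ 1 := by
    rw [hc]
    have : 0 < 1/((n:ℝ) - q) := by positivity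
    linarith
  have hconst : ∀ i ∈ Ico (q*S) m, (1 - 1/((n:ℝ) - (i/S : ℕ))) = c := by
    intro i hi
    simp only [Finset.mem_Ico] at hi
    have him : i < (q+1) * S := by
      have : m < (q+1) * S := (Nat.div_lt_iff_lt_mul hS).mp (by omega)
      omega
    have : i / S = q := Nat.div_eq_of_lt_le hi.1 him
    rw [this]
  have hprod : ∏ i ∈ range m, (1 - 1/((n:ℝ) - (i/S : ℕ)))
      = (((n:ℝ) - q)/n) ^ S * c ^ (m - q*S) := by
    rw [hsplit, Finset.prod_union hdisj, cc_tele S n hn q hqn.le,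
      Finset.prod_congr rfl hconst, Finset.prod_const, Nat.card_Ico]
  have hApos : (0:ℝ) ≤ ((n:ℝ) - q)/n := div_nonneg (by linarith) hnn.le
  constructor
  · rw [hprod]
    have hrS : m - q*S ≤ S := by
      have h1 : m % S < S := Nat.mod_lt m hS
      have h2 : q * S + m % S = m := by
        rw [hqdef, Nat.mul_comm]; exact Nat.div_add_mod m S
      omega
    have : c ^ S ≤ c ^ (m - q*S) := pow_le_pow_of_le_one hc0 hc1 hrS
    have hkey : (((n:ℝ) - q)/n) * c = (((n:ℝ) - q) - 1)/n := by
      rw [hc]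
      field_simp
    have hAc : ((((n:ℝ) - q) - 1)/n)^S = (((n:ℝ) - q)/n) ^ S * c ^ S := by
      rw [← mul_pow, hkey]
    rw [hAc]
    exact mul_le_mul_of_nonneg_left this (by positivity)
  · rw [hprod]
    calc (((n:ℝ) - q)/n) ^ S * c ^ (m - q*S)
        ≤ (((n:ℝ) - q)/n) ^ S * 1 := by
          exact mul_le_mul_of_nonneg_left (pow_le_one₀ hc0 hc1) (by positivity)
      _ = (((n:ℝ) - q)/n) ^ S := mul_one _


/-- Fix `S ≥ 1` and `τ ∈ [0, S)`. For the coupon-collector Markov chain with `n`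
symbols and `S` servers (`P n ℓ u = Pr[U_ℓ = u]` for the chain with parameter `n`),
the rescaled expectation `E[U_{⌊nτ⌋}]/n` converges to `(1 - τ/S)^S` as `n → ∞`. -/
theorem stmt_7 (S : ℕ) (hS : 0 < S) (τ : ℝ) (hτ0 : 0 ≤ τ) (hτS : τ < S)
    (P : ℕ → ℕ → ℕ → ℝ)
    (hPnn : ∀ n ℓ u, 0 ≤ P n ℓ u)
    (hPsupp : ∀ n ℓ u, n < u → P n ℓ u = 0)
    (hP0 : ∀ n u, P n 0 u = if u = n then 1 else 0)
    (hPstep : ∀ n, 0 < n → ∀ ℓ, ℓ < S * n → ∀ u,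
      P n (ℓ + 1) u =
        P n ℓ (u + 1) * (((u : ℝ) + 1) / ((n : ℝ) - (ℓ / S : ℕ)))
          + P n ℓ u * (1 - (u : ℝ) / ((n : ℝ) - (ℓ / S : ℕ)))) :
    Filter.Tendsto
      (fun n : ℕ =>
        (1 / (n : ℝ)) * ∑ u ∈ Finset.range (n + 1),
          (u : ℝ) * P n (⌊(n : ℝ) * τ⌋₊) u)
      Filter.atTop (nhds ((1 - τ / S) ^ S)) := by
  have hSr : (0:ℝ) < S := by exact_mod_cast hS
  -- closed form
  have hclosed : ∀ n : ℕ, 0 < n → ∀ m, m ≤ S * n →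
      ∑ u ∈ Finset.range (n+1), (u:ℝ) * P n m u
        = n * ∏ i ∈ Finset.range m, (1 - 1/((n:ℝ) - (i/S : ℕ))) := by
    intro n hn m hm
    induction m with
    | zero =>
      simp only [Finset.range_zero, Finset.prod_empty, mul_one]
      have : ∀ u ∈ Finset.range (n+1), (u:ℝ) * P n 0 u
          = if u = n then (u:ℝ) else 0 := by
        intro u _
        rw [hP0]
        split <;> simp
      rw [Finset.sum_congr rfl this, Finset.sum_ite_eq' (Finset.range (n+1)) n (fun u => (u:ℝ))]
      simp [Nat.lt_succ_self]
    | succ k ih =>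
      rw [cc_step S P hPsupp hPstep n hn k (by omega), ih (by omega),
        Finset.prod_range_succ]
      ring
  set m : ℕ → ℕ := fun n => ⌊(n:ℝ) * τ⌋₊ with hmdef
  set q : ℕ → ℕ := fun n => m n / S with hqdef
  have hm_lt : ∀ n : ℕ, 0 < n → m n < S * n := by
    intro n hn
    have hnr : (0:ℝ) < n := by exact_mod_cast hn
    have h1 : ((m n : ℕ):ℝ) ≤ (n:ℝ)*τ := Nat.floor_le (by positivity)
    have : ((m n : ℕ):ℝ) < ((S*n : ℕ):ℝ) := by push_cast; nlinarith
    exact_mod_cast this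
  -- q n / n → τ/S
  have hq_tendsto : Filter.Tendsto (fun n : ℕ => ((q n : ℕ):ℝ) / n)
      Filter.atTop (nhds (τ/S)) := by
    have hlow : Filter.Tendsto (fun n : ℕ => τ/S - 1/(n:ℝ)) Filter.atTop (nhds (τ/S)) := by
      have := tendsto_const_nhds.sub tendsto_one_div_atTop_nhds_zero_nat (a := τ/S) (l := Filter.atTop)
      simpa using this
    apply tendsto_of_tendsto_of_tendsto_of_le_of_le' hlow tendsto_const_nhds
    · filter_upwards [Filter.eventually_ge_atTop 1] with n hn
      have hnr : (0:ℝ) < n := by exact_mod_cast hn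
      have hmq : m n < (q n + 1) * S := (Nat.div_lt_iff_lt_mul hS).mp (by simp only [hqdef]; omega)
      have hmq' : ((m n : ℕ):ℝ) < ((q n : ℕ):ℝ) * S + S := by
        have : ((m n : ℕ):ℝ) < (((q n + 1) * S : ℕ):ℝ) := by exact_mod_cast hmq
        push_cast at this; linarith
      have hfl : (n:ℝ)*τ < (m n : ℝ) + 1 := Nat.lt_floor_add_one _
      have hmq2 : ((m n : ℕ):ℝ) + 1 ≤ ((q n : ℕ):ℝ)*S + S := by
        have : ((m n + 1 : ℕ):ℝ) ≤ (((q n + 1) * S : ℕ):ℝ) := by exact_mod_cast hmq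
        push_cast at this; linarith
      rw [sub_le_iff_le_add, ← add_div, div_le_div_iff₀ (by positivity) (by positivity)]
      nlinarith
    · filter_upwards [Filter.eventually_ge_atTop 1] with n hn
      have hnr : (0:ℝ) < n := by exact_mod_cast hn
      have hqm : q n * S ≤ m n := Nat.div_mul_le_self (m n) S
      have hqm' : ((q n : ℕ):ℝ) * S ≤ (m n : ℝ) := by exact_mod_cast hqm
      have h1 : ((m n : ℕ):ℝ) ≤ (n:ℝ)*τ := Nat.floor_le (by positivity)
      rw [div_le_div_iff₀ (by positivity) (by positivity)]
      nlinarith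
  have hA : Filter.Tendsto (fun n : ℕ => (((n:ℝ) - (q n))/n)^S)
      Filter.atTop (nhds ((1 - τ/S)^S)) := by
    apply Filter.Tendsto.pow
    have h1 : Filter.Tendsto (fun n : ℕ => 1 - ((q n : ℕ):ℝ)/n) Filter.atTop (nhds (1 - τ/S)) :=
      tendsto_const_nhds.sub hq_tendsto
    apply h1.congr'
    filter_upwards [Filter.eventually_ge_atTop 1] with n hn
    have hnr : (0:ℝ) < n := by exact_mod_cast hn
    field_simp
  have hB : Filter.Tendsto (fun n : ℕ => ((((n:ℝ) - (q n)) - 1)/n)^S)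
      Filter.atTop (nhds ((1 - τ/S)^S)) := by
    apply Filter.Tendsto.pow
    have h1 : Filter.Tendsto (fun n : ℕ => 1 - ((q n : ℕ):ℝ)/n - 1/(n:ℝ))
        Filter.atTop (nhds (1 - τ/S - 0)) :=
      (tendsto_const_nhds.sub hq_tendsto).sub tendsto_one_div_atTop_nhds_zero_nat
    rw [sub_zero] at h1
    apply h1.congr'
    filter_upwards [Filter.eventually_ge_atTop 1] with n hn
    have hnr : (0:ℝ) < n := by exact_mod_cast hn
    field_simp
  apply tendsto_of_tendsto_of_tendsto_of_le_of_le' hB hA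
  · filter_upwards [Filter.eventually_ge_atTop 1] with n hn
    have hn' : 0 < n := hn
    have hnr : (0:ℝ) < n := by exact_mod_cast hn
    rw [hclosed n hn' (m n) (hm_lt n hn').le, ← mul_assoc, one_div,
      inv_mul_cancel₀ (by positivity : (n:ℝ) ≠ 0), one_mul]
    exact (cc_bounds S hS n (m n) hn' (hm_lt n hn')).1
  · filter_upwards [Filter.eventually_ge_atTop 1] with n hn
    have hn' : 0 < n := hn
    have hnr : (0:ℝ) < n := by exact_mod_cast hn
    rw [hclosed n hn' (m n) (hm_lt n hn').le, ← mul_assoc, one_div,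
      inv_mul_cancel₀ (by positivity : (n:ℝ) ≠ 0), one_mul]
    exact (cc_bounds S hS n (m n) hn' (hm_lt n hn')).2
end
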